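/- arXiv:1303.1841 — 3 statements merged into one kernel-verified Lean document; each statement's English description precedes it below -/
import Mathlib

section
/- Let p > 1 and q > 1 with 1/p + 1/q = 1. There exists a positive constant B (depending only on p) such that for every real s > 0, the series ∑_{k=0}^∞ exp(q k^{1/q}) e^{−k s} converges and is at most exp(B s^{−(p−1)}). -/
open Real

private lemma young_aux' {p q σ u : ℝ} (hpq : p.HolderConjugate q) (hσ : 0 < σ) (hu : 0 ≤ u) :
    q * u ≤ σ * u ^ q + (q - 1) * σ ^ (-(p-1)) := by
  have hq0 : 0 < q := hpq.symm.pos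
  have hp0 : 0 < p := hpq.pos
  have hqσ : (0:ℝ) ≤ q * σ := le_of_lt (mul_pos hq0 hσ)
  have ha : (0:ℝ) ≤ u * (q*σ) ^ (1/q) := mul_nonneg hu (rpow_nonneg hqσ _)
  have hb : (0:ℝ) ≤ q ^ (1/p) * σ ^ (-(1/q)) :=
    mul_nonneg (rpow_nonneg hq0.le _) (rpow_nonneg hσ.le _)
  have key := Real.young_inequality_of_nonneg ha hb hpq.symm
  have hab : (u * (q*σ) ^ (1/q)) * (q ^ (1/p) * σ ^ (-(1/q))) = q * u := by
    rw [Real.mul_rpow hq0.le hσ.le]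
    have h1 : q ^ (1/q) * q ^ (1/p) = q := by
      rw [← Real.rpow_add hq0]
      have h3 : 1/q + 1/p = 1 := by
        have := hpq.inv_add_inv_eq_one; rw [inv_eq_one_div, inv_eq_one_div] at this; linarith
      rw [h3, Real.rpow_one]
    have h2 : σ ^ (1/q) * σ ^ (-(1/q)) = 1 := by
      rw [← Real.rpow_add hσ]; simp
    calc u * (q ^ (1/q) * σ ^ (1/q)) * (q ^ (1/p) * σ ^ (-(1/q)))
        = u * ((q ^ (1/q) * q ^ (1/p)) * (σ ^ (1/q) * σ ^ (-(1/q)))) := by ring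
      _ = q * u := by rw [h1, h2]; ring
  have haq : (u * (q*σ) ^ (1/q)) ^ q / q = σ * u ^ q := by
    rw [Real.mul_rpow hu (rpow_nonneg hqσ _), ← Real.rpow_mul hqσ,
      one_div_mul_cancel hq0.ne', Real.rpow_one]
    field_simp
  have hbp : (q ^ (1/p) * σ ^ (-(1/q))) ^ p / p = (q - 1) * σ ^ (-(p-1)) := by
    rw [Real.mul_rpow (rpow_nonneg hq0.le _) (rpow_nonneg hσ.le _),
      ← Real.rpow_mul hq0.le, ← Real.rpow_mul hσ.le,
      one_div_mul_cancel hp0.ne', Real.rpow_one]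
    have h4 : -(1/q) * p = -(p-1) := by
      rw [← hpq.div_conj_eq_sub_one]; ring
    have h5 : q / p = q - 1 := hpq.symm.div_conj_eq_sub_one
    rw [h4, ← h5]; ring
  rw [hab, haq, hbp] at key
  exact key

/-- per-term bound valid for every `s > 0`. -/
private lemma term_bound' {p q : ℝ} (hpq : p.HolderConjugate q) {s : ℝ} (hs : 0 < s) (k : ℕ) :
    Real.exp (q * (k : ℝ) ^ (1/q)) * Real.exp (-(k : ℝ) * s) ≤
      Real.exp ((q-1) * (s/2) ^ (-(p-1))) * Real.exp (-(s/2)) ^ k := by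
  have hq0 : 0 < q := hpq.symm.pos
  have hσ : 0 < s/2 := by linarith
  have hu : (0:ℝ) ≤ (k:ℝ) ^ (1/q) := rpow_nonneg (Nat.cast_nonneg k) _
  have hk : ((k:ℝ) ^ (1/q)) ^ q = (k:ℝ) := by
    rw [← Real.rpow_mul (Nat.cast_nonneg k), one_div_mul_cancel hq0.ne', Real.rpow_one]
  have hy := young_aux' hpq hσ hu
  rw [hk] at hy
  rw [← Real.exp_nat_mul, ← Real.exp_add, ← Real.exp_add]
  apply Real.exp_le_exp.mpr
  linarith

private lemma summable_aux {p q : ℝ} (hpq : p.HolderConjugate q) {s : ℝ} (hs : 0 < s) :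
    Summable (fun k : ℕ => Real.exp (q * (k : ℝ) ^ (1/q)) * Real.exp (-(k : ℝ) * s)) := by
  have hr0 : (0:ℝ) ≤ Real.exp (-(s/2)) := (Real.exp_pos _).le
  have hr1 : Real.exp (-(s/2)) < 1 := Real.exp_lt_one_iff.mpr (by linarith)
  exact Summable.of_nonneg_of_le
    (fun k => mul_nonneg (Real.exp_pos _).le (Real.exp_pos _).le)
    (term_bound' hpq hs)
    ((summable_geometric_of_lt_one hr0 hr1).mul_left _)

/-- main bound, valid for all `s > 0`. -/
private lemma tsum_bound_general {p q : ℝ} (hpq : p.HolderConjugate q) {s : ℝ} (hs : 0 < s) :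
    ∑' k : ℕ, Real.exp (q * (k : ℝ) ^ (1/q)) * Real.exp (-(k : ℝ) * s) ≤
      Real.exp ((q-1) * (s/2) ^ (-(p-1))) * (1 + 2/s) := by
  set r := Real.exp (-(s/2)) with hr
  have hr0 : (0:ℝ) ≤ r := (Real.exp_pos _).le
  have hr1 : r < 1 := Real.exp_lt_one_iff.mpr (by linarith)
  have hSg : Summable (fun k : ℕ => Real.exp ((q-1) * (s/2) ^ (-(p-1))) * r ^ k) :=
    (summable_geometric_of_lt_one hr0 hr1).mul_left _
  have h1 : ∑' k : ℕ, Real.exp (q * (k : ℝ) ^ (1/q)) * Real.exp (-(k : ℝ) * s) ≤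
      Real.exp ((q-1) * (s/2) ^ (-(p-1))) * (1 - r)⁻¹ := by
    calc ∑' k : ℕ, Real.exp (q * (k : ℝ) ^ (1/q)) * Real.exp (-(k : ℝ) * s)
        ≤ ∑' k : ℕ, Real.exp ((q-1) * (s/2) ^ (-(p-1))) * r ^ k :=
          Summable.tsum_le_tsum (term_bound' hpq hs) (summable_aux hpq hs) hSg
      _ = Real.exp ((q-1) * (s/2) ^ (-(p-1))) * (1 - r)⁻¹ := by
          rw [tsum_mul_left, tsum_geometric_of_lt_one hr0 hr1]
  have h2 : (1 - r)⁻¹ ≤ 1 + 2/s := by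
    have hE := Real.add_one_le_exp (s/2)
    have hEpos : (0:ℝ) < Real.exp (s/2) := Real.exp_pos _
    have hrE : r = (Real.exp (s/2))⁻¹ := by rw [hr, Real.exp_neg]
    have h1r : 0 < 1 - r := by linarith
    rw [← one_div, div_le_iff₀ h1r, hrE]
    have hinv : Real.exp (s/2) * (Real.exp (s/2))⁻¹ = 1 := mul_inv_cancel₀ hEpos.ne'
    have hinvle : (Real.exp (s/2))⁻¹ ≤ (1 + s/2)⁻¹ := by
      apply inv_anti₀ (by linarith) (by linarith)
    have hs2 : (0:ℝ) < 1 + s/2 := by linarith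
    have : (1 + s/2) * (1 + s/2)⁻¹ = 1 := mul_inv_cancel₀ hs2.ne'
    have h2s : 2/s * s = 2 := div_mul_cancel₀ 2 hs.ne'
    nlinarith [mul_pos hs (sub_pos.mpr hr1), div_pos (by norm_num : (0:ℝ) < 2) hs]
  calc ∑' k : ℕ, Real.exp (q * (k : ℝ) ^ (1/q)) * Real.exp (-(k : ℝ) * s)
      ≤ Real.exp ((q-1) * (s/2) ^ (-(p-1))) * (1 - r)⁻¹ := h1
    _ ≤ Real.exp ((q-1) * (s/2) ^ (-(p-1))) * (1 + 2/s) :=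
        mul_le_mul_of_nonneg_left h2 (Real.exp_pos _).le

/-- tail bound for `s ≥ 2q`. -/
private lemma tsum_bound_tail {p q : ℝ} (hpq : p.HolderConjugate q) {s : ℝ}
    (hs2q : 2*q ≤ s) :
    ∑' k : ℕ, Real.exp (q * (k : ℝ) ^ (1/q)) * Real.exp (-(k : ℝ) * s) ≤
      1 + 2 * Real.exp (-(s/2)) := by
  have hq1 : 1 < q := hpq.symm.lt
  have hq0 : 0 < q := hpq.symm.pos
  have hs : 0 < s := by linarith
  set r := Real.exp (-(s/2)) with hr
  have hr0 : (0:ℝ) ≤ r := (Real.exp_pos _).le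
  have hr1 : r < 1 := Real.exp_lt_one_iff.mpr (by linarith)
  have hterm : ∀ k : ℕ, Real.exp (q * (k : ℝ) ^ (1/q)) * Real.exp (-(k : ℝ) * s) ≤ r ^ k := by
    intro k
    rw [hr, ← Real.exp_nat_mul, ← Real.exp_add]
    apply Real.exp_le_exp.mpr
    rcases Nat.eq_zero_or_pos k with hk0 | hk1
    · subst hk0
      simp [Real.zero_rpow (inv_ne_zero hq0.ne')]
    · have hk1' : (1:ℝ) ≤ (k:ℝ) := by exact_mod_cast hk1
      have h1 : (k:ℝ) ^ (1/q) ≤ (k:ℝ) := by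
        calc (k:ℝ) ^ (1/q) ≤ (k:ℝ) ^ (1:ℝ) :=
          Real.rpow_le_rpow_of_exponent_le hk1' (by rw [div_le_one hq0]; linarith)
          _ = (k:ℝ) := Real.rpow_one _
      have h2 : q * (k:ℝ) ≤ s/2 * (k:ℝ) := by nlinarith
      nlinarith [mul_le_mul_of_nonneg_left h1 hq0.le]
  have hf : Summable (fun k : ℕ => Real.exp (q * (k : ℝ) ^ (1/q)) * Real.exp (-(k : ℝ) * s)) :=
    summable_aux hpq hs
  rw [Summable.tsum_eq_zero_add hf]
  have h0 : Real.exp (q * ((0:ℕ) : ℝ) ^ (1/q)) * Real.exp (-((0:ℕ) : ℝ) * s) = 1 := by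
    simp [Real.zero_rpow (inv_ne_zero hq0.ne')]
  rw [h0]
  have hshift : Summable (fun k : ℕ =>
      Real.exp (q * ((k+1 : ℕ) : ℝ) ^ (1/q)) * Real.exp (-((k+1 : ℕ) : ℝ) * s)) :=
    (summable_nat_add_iff 1).mpr hf
  have hgeo : Summable (fun k : ℕ => r ^ (k+1)) := by
    simpa [pow_succ] using (summable_geometric_of_lt_one hr0 hr1).mul_right r
  have htail : ∑' k : ℕ, Real.exp (q * ((k+1 : ℕ) : ℝ) ^ (1/q)) * Real.exp (-((k+1 : ℕ) : ℝ) * s)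
      ≤ ∑' k : ℕ, r ^ (k+1) := Summable.tsum_le_tsum (fun k => hterm (k+1)) hshift hgeo
  have hgeoval : ∑' k : ℕ, r ^ (k+1) = r * (1 - r)⁻¹ := by
    have : ∀ k : ℕ, r ^ (k+1) = r * r ^ k := fun k => by ring
    rw [tsum_congr this, tsum_mul_left, tsum_geometric_of_lt_one hr0 hr1]
  have hrhalf : r ≤ 1/2 := by
    have h1 : -(s/2) ≤ -1 := by linarith
    have h2 : r ≤ Real.exp (-1) := Real.exp_le_exp.mpr h1
    have h3 : Real.exp (-1) ≤ 1/2 := by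
      rw [Real.exp_neg]
      have : (2:ℝ) ≤ Real.exp 1 := by
        have := Real.exp_one_gt_d9; linarith
      rw [inv_le_comm₀ (Real.exp_pos 1) (by norm_num)] at *
      · linarith [this]
    linarith
  have hfinal : r * (1 - r)⁻¹ ≤ 2 * r := by
    have h1r : (0:ℝ) < 1 - r := by linarith
    have : (1 - r)⁻¹ ≤ 2 := by
      rw [inv_le_comm₀ h1r (by norm_num)]
      linarith
    nlinarith
  linarith [htail, hgeoval ▸ htail]
set_option maxHeartbeats 1000000 in
theorem laplace_series_bound (p q : ℝ) (hp : 1 < p) (hq : 1 < q) (hpq : 1 / p + 1 / q = 1) :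
    ∃ B : ℝ, 0 < B ∧ ∀ s : ℝ, 0 < s →
      Summable (fun k : ℕ => Real.exp (q * (k : ℝ) ^ (1 / q)) * Real.exp (-(k : ℝ) * s)) ∧
      ∑' k : ℕ, Real.exp (q * (k : ℝ) ^ (1 / q)) * Real.exp (-(k : ℝ) * s) ≤
        Real.exp (B * s ^ (-(p - 1))) := by
  have hpq' : p.HolderConjugate q := Real.holderConjugate_iff.mpr ⟨hp, by rw [inv_eq_one_div, inv_eq_one_div]; exact hpq⟩
  have hp1 : 0 < p - 1 := by linarith
  set n := Nat.ceil p with hn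
  set C : ℝ := (n.factorial : ℝ) * 2 ^ (n+1) with hC
  have hCpos : 0 < C := by positivity
  have hlog3 : 0 ≤ Real.log 3 := Real.log_nonneg (by norm_num)
  have h2p : 0 < (2:ℝ) ^ (p-1) := Real.rpow_pos_of_pos (by norm_num) _
  have h2q : 0 < (2*q:ℝ) ^ (p-1) := Real.rpow_pos_of_pos (by linarith) _
  set B : ℝ := (q-1) * 2 ^ (p-1) + Real.log 3 * (1 + (2*q) ^ (p-1)) + 1/(p-1) + C + 1 with hB
  have hq1pos : 0 < q - 1 := by linarith
  have hterm1 : 0 < (q-1) * 2 ^ (p-1) := mul_pos hq1pos h2p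
  have hterm2 : 0 ≤ Real.log 3 * (1 + (2*q) ^ (p-1)) := mul_nonneg hlog3 (by positivity)
  have hterm3 : 0 < 1/(p-1) := by positivity
  have hBpos : 0 < B := by rw [hB]; linarith
  refine ⟨B, hBpos, fun s hs => ⟨summable_aux hpq' hs, ?_⟩⟩
  set y := s ^ (-(p-1)) with hy
  have hypos : 0 < y := Real.rpow_pos_of_pos hs _
  have hM : (s/2) ^ (-(p-1)) = 2 ^ (p-1) * y := by
    have h : (s/2 : ℝ) = s * 2⁻¹ := by ring
    rw [hy, h, Real.mul_rpow hs.le (by norm_num), Real.inv_rpow (by norm_num : (0:ℝ) ≤ 2),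
      ← Real.rpow_neg (by norm_num : (0:ℝ) ≤ 2), neg_neg, mul_comm]
  rcases le_or_gt s (2*q) with hsmall | hlarge
  · have hgen := tsum_bound_general hpq' hs
    rw [hM] at hgen
    rcases le_or_gt s 1 with hs1 | hs1
    · -- s ≤ 1
      have hy1 : 1 ≤ y := by
        calc (1:ℝ) = s ^ (0:ℝ) := (Real.rpow_zero s).symm
          _ ≤ y := Real.rpow_le_rpow_of_exponent_ge hs hs1 (by linarith)
      have hlogs : -Real.log s ≤ y / (p-1) := by
        have h1 : Real.log y = -(p-1) * Real.log s := Real.log_rpow hs _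
        have h2 : Real.log y ≤ y := (Real.log_le_sub_one_of_pos hypos).trans (by linarith)
        rw [h1] at h2
        rw [le_div_iff₀ hp1]
        nlinarith
      have h3s : 1 + 2/s ≤ 3/s := by
        rw [le_div_iff₀ hs]
        have hss : (1 + 2/s) * s = s + 2 := by field_simp
        rw [hss]; linarith
      have hexp3s : 3/s ≤ Real.exp (Real.log 3 * y + y/(p-1)) := by
        have he : (3:ℝ)/s = Real.exp (Real.log (3/s)) := (Real.exp_log (by positivity)).symm
        rw [he]
        apply Real.exp_le_exp.mpr
        rw [Real.log_div (by norm_num) hs.ne']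
        have h33 : Real.log 3 ≤ Real.log 3 * y := le_mul_of_one_le_right hlog3 hy1
        linarith
      calc ∑' k : ℕ, Real.exp (q * (k : ℝ) ^ (1/q)) * Real.exp (-(k : ℝ) * s)
          ≤ Real.exp ((q-1) * (2 ^ (p-1) * y)) * (1 + 2/s) := hgen
        _ ≤ Real.exp ((q-1) * (2 ^ (p-1) * y)) * Real.exp (Real.log 3 * y + y/(p-1)) := by
            apply mul_le_mul_of_nonneg_left (h3s.trans hexp3s) (Real.exp_pos _).le
        _ = Real.exp ((q-1) * (2 ^ (p-1) * y) + (Real.log 3 * y + y/(p-1))) :=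
            (Real.exp_add _ _).symm
        _ ≤ Real.exp (B * y) := by
            apply Real.exp_le_exp.mpr
            have hc : 0 ≤ Real.log 3 * ((2*q) ^ (p-1)) * y := by positivity
            have hcy : 0 ≤ C * y := by positivity
            have expand : B * y = (q-1) * (2 ^ (p-1) * y) + (Real.log 3 * y + y/(p-1))
                + (Real.log 3 * ((2*q) ^ (p-1)) * y + C * y + y) := by rw [hB]; ring
            rw [expand]
            linarith [hypos.le]
    · -- 1 < s ≤ 2q
      have h12 : 1 + 2/s ≤ 3 := by
        have h2s : 2/s ≤ 2 := by rw [div_le_iff₀ hs]; linarith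
        linarith
      have h1y : 1 ≤ (2*q) ^ (p-1) * y := by
        have hqs : 1 ≤ 2*q/s := by rw [le_div_iff₀ hs]; linarith
        calc (1:ℝ) = (2*q/s) ^ (0:ℝ) := (Real.rpow_zero _).symm
          _ ≤ (2*q/s) ^ (p-1) := Real.rpow_le_rpow_of_exponent_le hqs (by linarith)
          _ = (2*q) ^ (p-1) * y := by
              rw [Real.div_rpow (by linarith) hs.le, hy, Real.rpow_neg hs.le, div_eq_mul_inv]
      have h3 : 1 + 2/s ≤ Real.exp (Real.log 3 * ((2*q) ^ (p-1) * y)) := by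
        calc 1 + 2/s ≤ 3 := h12
          _ = Real.exp (Real.log 3) := (Real.exp_log (by norm_num)).symm
          _ ≤ _ := Real.exp_le_exp.mpr (le_mul_of_one_le_right hlog3 h1y)
      calc ∑' k : ℕ, Real.exp (q * (k : ℝ) ^ (1/q)) * Real.exp (-(k : ℝ) * s)
          ≤ Real.exp ((q-1) * (2 ^ (p-1) * y)) * (1 + 2/s) := hgen
        _ ≤ Real.exp ((q-1) * (2 ^ (p-1) * y)) *
              Real.exp (Real.log 3 * ((2*q) ^ (p-1) * y)) := by
            apply mul_le_mul_of_nonneg_left h3 (Real.exp_pos _).le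
        _ = Real.exp ((q-1) * (2 ^ (p-1) * y) + Real.log 3 * ((2*q) ^ (p-1) * y)) :=
            (Real.exp_add _ _).symm
        _ ≤ Real.exp (B * y) := by
            apply Real.exp_le_exp.mpr
            have hc : 0 ≤ Real.log 3 * y := by positivity
            have hcy : 0 ≤ C * y := by positivity
            have hd : 0 ≤ y/(p-1) := by positivity
            have expand : B * y = (q-1) * (2 ^ (p-1) * y) + Real.log 3 * ((2*q) ^ (p-1) * y)
                + (Real.log 3 * y + y/(p-1) + C * y + y) := by rw [hB]; ring
            rw [expand]
            linarith [hypos.le]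
  · -- s > 2q
    have htail := tsum_bound_tail hpq' hlarge.le
    have hs1 : 1 ≤ s := by nlinarith
    have hspos : 0 < s ^ (p-1) := Real.rpow_pos_of_pos hs _
    have hr2 : 2 * Real.exp (-(s/2)) ≤ C * y := by
      have hsp : s ^ (p-1) ≤ s ^ (n:ℕ) := by
        calc s ^ (p-1) ≤ s ^ ((n:ℕ):ℝ) := by
              apply Real.rpow_le_rpow_of_exponent_le hs1
              have := Nat.le_ceil p
              push_cast
              rw [hn]
              push_cast at this ⊢
              linarith
          _ = s ^ (n:ℕ) := Real.rpow_natCast s n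
      have hsn : s ^ (n:ℕ) ≤ (n.factorial : ℝ) * 2^n * Real.exp (s/2) := by
        have h := Real.pow_div_factorial_le_exp (x := s/2) (by linarith) n
        rw [div_pow, div_div, div_le_iff₀ (by positivity)] at h
        nlinarith [h]
      rw [Real.exp_neg, hy, Real.rpow_neg hs.le, ← div_eq_mul_inv, ← div_eq_mul_inv,
        div_le_div_iff₀ (Real.exp_pos _) hspos]
      calc 2 * s ^ (p-1) ≤ 2 * (s ^ (n:ℕ)) := by nlinarith
        _ ≤ 2 * ((n.factorial:ℝ) * 2^n * Real.exp (s/2)) := by nlinarith [Real.exp_pos (s/2)]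
        _ = C * Real.exp (s/2) := by rw [hC]; ring
    have h2r : 1 + 2 * Real.exp (-(s/2)) ≤ Real.exp (C * y) := by
      have ha := Real.add_one_le_exp (2 * Real.exp (-(s/2)))
      have hmono := Real.exp_le_exp.mpr hr2
      linarith
    calc ∑' k : ℕ, Real.exp (q * (k : ℝ) ^ (1/q)) * Real.exp (-(k : ℝ) * s)
        ≤ 1 + 2 * Real.exp (-(s/2)) := htail
      _ ≤ Real.exp (C * y) := h2r
      _ ≤ Real.exp (B * y) := by
          apply Real.exp_le_exp.mpr
          apply mul_le_mul_of_nonneg_right _ hypos.le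
          rw [hB]; linarith
end

section
/- Let h(t) = t + √(t² − 1) for t ≥ 1. Then for every real r ≥ 0, log h(1 + r) ≤ 2(1 + √3)^{1/2} · √r. -/
theorem log_h_le_sqrt_global (r : ℝ) (hr : 0 ≤ r) :
    Real.log ((1 + r) + Real.sqrt ((1 + r) ^ 2 - 1)) ≤
      2 * Real.sqrt (1 + Real.sqrt 3) * Real.sqrt r := by
  have h3 : (1:ℝ) ≤ Real.sqrt 3 := by
    rw [show (1:ℝ) = Real.sqrt 1 by simp]
    exact Real.sqrt_le_sqrt (by norm_num)
  have hsr : 0 ≤ Real.sqrt r := Real.sqrt_nonneg r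
  have hsC : (1:ℝ) ≤ Real.sqrt (1 + Real.sqrt 3) := by
    have := Real.sqrt_le_sqrt (show (1:ℝ) ≤ 1 + Real.sqrt 3 by linarith)
    rwa [Real.sqrt_one] at this
  rcases le_or_gt r 1 with hr1 | hr1
  · -- r ≤ 1
    have hkey : (1 + r) ^ 2 - 1 = r * (2 + r) := by ring
    have hs1 : Real.sqrt ((1 + r) ^ 2 - 1) ≤ Real.sqrt 3 * Real.sqrt r := by
      rw [hkey, ← Real.sqrt_mul (by norm_num : (0:ℝ) ≤ 3)]
      exact Real.sqrt_le_sqrt (by nlinarith)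
    have hpos : 0 < (1 + r) + Real.sqrt ((1 + r) ^ 2 - 1) := by
      have := Real.sqrt_nonneg ((1 + r) ^ 2 - 1); linarith
    have hlog := Real.log_le_sub_one_of_pos hpos
    have hrs : r ≤ Real.sqrt r := by
      nlinarith [Real.sq_sqrt hr, Real.sqrt_le_one.mpr hr1]
    have hC : (1:ℝ) + Real.sqrt 3 ≤ 2 * Real.sqrt (1 + Real.sqrt 3) := by
      have ha : (0:ℝ) ≤ 1 + Real.sqrt 3 := by linarith
      have h2 : Real.sqrt (1 + Real.sqrt 3) ≤ 2 := by
        rw [show (2:ℝ) = Real.sqrt 4 by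
          rw [show (4:ℝ) = 2^2 by norm_num, Real.sqrt_sq (by norm_num)]]
        refine Real.sqrt_le_sqrt ?_
        have : Real.sqrt 3 ≤ 2 := by
          rw [show (2:ℝ) = Real.sqrt 4 by
            rw [show (4:ℝ) = 2^2 by norm_num, Real.sqrt_sq (by norm_num)]]
          exact Real.sqrt_le_sqrt (by norm_num)
        linarith
      nlinarith [Real.sq_sqrt ha, Real.sqrt_nonneg (1 + Real.sqrt 3)]
    calc Real.log ((1 + r) + Real.sqrt ((1 + r) ^ 2 - 1))
        ≤ (1 + r) + Real.sqrt ((1 + r) ^ 2 - 1) - 1 := hlog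
      _ ≤ r + Real.sqrt 3 * Real.sqrt r := by linarith
      _ ≤ (1 + Real.sqrt 3) * Real.sqrt r := by nlinarith
      _ ≤ 2 * Real.sqrt (1 + Real.sqrt 3) * Real.sqrt r := by nlinarith
  · -- r > 1
    have hs1 : Real.sqrt ((1 + r) ^ 2 - 1) ≤ 1 + r := by
      calc Real.sqrt ((1 + r) ^ 2 - 1) ≤ Real.sqrt ((1 + r) ^ 2) :=
            Real.sqrt_le_sqrt (by linarith)
        _ = 1 + r := by rw [Real.sqrt_sq (by linarith)]
    have hpos : 0 < (1 + r) + Real.sqrt ((1 + r) ^ 2 - 1) := by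
      have := Real.sqrt_nonneg ((1 + r) ^ 2 - 1); linarith
    have h4r : (1 + r) + Real.sqrt ((1 + r) ^ 2 - 1) ≤ 4 * r := by linarith
    have hrpos : 0 < r := by linarith
    have hlog1 : Real.log ((1 + r) + Real.sqrt ((1 + r) ^ 2 - 1)) ≤ Real.log (4 * r) :=
      Real.log_le_log hpos h4r
    have hlog4 : Real.log (4 * r) = 2 * Real.log 2 + Real.log r := by
      rw [Real.log_mul (by norm_num) (ne_of_gt hrpos),
        show (4:ℝ) = 2^2 by norm_num, Real.log_pow]
      push_cast; ring
    have hlogr : Real.log r = 2 * Real.log (Real.sqrt r) := by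
      rw [Real.log_sqrt hr]; ring
    have hsrpos : 0 < Real.sqrt r := Real.sqrt_pos.mpr hrpos
    have hlsr : Real.log (Real.sqrt r) ≤ Real.sqrt r - 1 :=
      Real.log_le_sub_one_of_pos hsrpos
    have hl2 : Real.log 2 < 0.6931471808 := Real.log_two_lt_d9
    have h2s : (2:ℝ) * Real.sqrt r ≤ 2 * Real.sqrt (1 + Real.sqrt 3) * Real.sqrt r := by
      nlinarith
    calc Real.log ((1 + r) + Real.sqrt ((1 + r) ^ 2 - 1))
        ≤ 2 * Real.log 2 + Real.log r := by rw [← hlog4]; exact hlog1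
      _ ≤ 2 * Real.log 2 + 2 * (Real.sqrt r - 1) := by rw [hlogr]; linarith
      _ ≤ 2 * Real.sqrt r := by nlinarith
      _ ≤ 2 * Real.sqrt (1 + Real.sqrt 3) * Real.sqrt r := h2s
end

section
/- Let σ ∈ (0,1], A ≥ 1/σ, c ∈ (0,1], and let ψ(t) = A σ e^{σ t} so that ψ^{−1}(y) = (1/σ) log(y/(Aσ)). Then for all natural numbers n ≥ 1 and k with 1 ≤ k ≤ n, exp(−k ψ^{−1}(ck/n) + n·A·exp(σ ψ^{−1}(ck/n))) = (Aσ/c)^{k/σ} (n/k)^{k/σ} e^{ck/σ}, and this is at most (A σ e^c n / c)^{k/σ} (1/k!)^{1/σ}. -/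
theorem m_bounded_key_computation (σ A c : ℝ) (hσ0 : 0 < σ) (hσ1 : σ ≤ 1)
    (hA : 1 / σ ≤ A) (hc0 : 0 < c) (hc1 : c ≤ 1)
    (n k : ℕ) (hk : 1 ≤ k) (hkn : k ≤ n) :
    Real.exp (-(k : ℝ) * ((1 / σ) * Real.log (c * k / (A * σ * n)))
        + (n : ℝ) * A * Real.exp (σ * ((1 / σ) * Real.log (c * k / (A * σ * n))))) =
      (A * σ / c) ^ ((k : ℝ) / σ) * ((n : ℝ) / k) ^ ((k : ℝ) / σ) * Real.exp (c * k / σ) ∧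
    (A * σ / c) ^ ((k : ℝ) / σ) * ((n : ℝ) / k) ^ ((k : ℝ) / σ) * Real.exp (c * k / σ) ≤
      (A * σ * Real.exp c * n / c) ^ ((k : ℝ) / σ) *
        ((1 : ℝ) / (k.factorial : ℝ)) ^ ((1 : ℝ) / σ) := by
  have hA0 : 0 < A := lt_of_lt_of_le (by positivity) hA
  have hk0 : (0 : ℝ) < k := by exact_mod_cast hk
  have hn0 : (0 : ℝ) < n := lt_of_lt_of_le hk0 (by exact_mod_cast hkn)
  have hx : (0 : ℝ) < c * k / (A * σ * n) := by positivity
  have hσ : σ ≠ 0 := ne_of_gt hσ0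
  have h1 : σ * ((1 / σ) * Real.log (c * k / (A * σ * n))) = Real.log (c * k / (A * σ * n)) := by
    field_simp
  have heq : Real.exp (-(k : ℝ) * ((1 / σ) * Real.log (c * k / (A * σ * n)))
        + (n : ℝ) * A * Real.exp (σ * ((1 / σ) * Real.log (c * k / (A * σ * n))))) =
      (A * σ / c) ^ ((k : ℝ) / σ) * ((n : ℝ) / k) ^ ((k : ℝ) / σ) * Real.exp (c * k / σ) := by
    rw [h1, Real.exp_log hx, Real.exp_add]
    have h2 : (n : ℝ) * A * (c * k / (A * σ * n)) = c * k / σ := by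
      field_simp
    rw [h2]
    congr 1
    have h3 : Real.exp (-(k : ℝ) * ((1 / σ) * Real.log (c * k / (A * σ * n)))) =
        (c * k / (A * σ * n)) ^ (-((k : ℝ) / σ)) := by
      rw [Real.rpow_def_of_pos hx]; ring_nf
    rw [h3, Real.rpow_neg hx.le, ← Real.inv_rpow hx.le,
        ← Real.mul_rpow (by positivity) (by positivity)]
    congr 1
    field_simp
  refine ⟨heq, ?_⟩
  have hr : A * σ * Real.exp c * n / c = (A * σ / c) * (Real.exp c * n) := by ring
  rw [hr, Real.mul_rpow (by positivity) (by positivity),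
      Real.mul_rpow (Real.exp_pos c).le hn0.le]
  have hexp : (Real.exp c) ^ ((k : ℝ) / σ) = Real.exp (c * k / σ) := by
    rw [Real.rpow_def_of_pos (Real.exp_pos c), Real.log_exp, mul_div_assoc]
  rw [hexp]
  have hnk : ((n : ℝ) / k) ^ ((k : ℝ) / σ) =
      (n : ℝ) ^ ((k : ℝ) / σ) * ((1 : ℝ) / k) ^ ((k : ℝ) / σ) := by
    rw [← Real.mul_rpow hn0.le (by positivity)]
    congr 1; ring
  rw [hnk]
  have hkey : ((1 : ℝ) / k) ^ ((k : ℝ) / σ) ≤ ((1 : ℝ) / (k.factorial : ℝ)) ^ ((1 : ℝ) / σ) := by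
    have : ((1 : ℝ) / k) ^ ((k : ℝ) / σ) = (((1 : ℝ) / k) ^ k) ^ ((1 : ℝ) / σ) := by
      rw [← Real.rpow_natCast ((1 : ℝ) / k) k, ← Real.rpow_mul (by positivity)]
      congr 1; field_simp
    rw [this]
    apply Real.rpow_le_rpow (by positivity) _ (by positivity)
    rw [one_div_pow, one_div, one_div]
    apply inv_anti₀ (by exact_mod_cast k.factorial_pos)
    exact_mod_cast k.factorial_le_pow
  calc (A * σ / c) ^ ((k : ℝ) / σ) * ((n : ℝ) ^ ((k : ℝ) / σ) * ((1 : ℝ) / k) ^ ((k : ℝ) / σ)) *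
        Real.exp (c * k / σ)
      = (A * σ / c) ^ ((k : ℝ) / σ) * Real.exp (c * k / σ) * (n : ℝ) ^ ((k : ℝ) / σ) *
        ((1 : ℝ) / k) ^ ((k : ℝ) / σ) := by ring
    _ ≤ (A * σ / c) ^ ((k : ℝ) / σ) * Real.exp (c * k / σ) * (n : ℝ) ^ ((k : ℝ) / σ) *
        ((1 : ℝ) / (k.factorial : ℝ)) ^ ((1 : ℝ) / σ) := by
        gcongr
    _ = _ := by ring
end
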